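/- For every f : ℝ → ℝ with f ∈ L²(F) and every z ∈ ℝ with S(z) > 0, one has ∫_{(0,z]} (Af)(s)·S(s)⁻¹ dF(s) = ∫ f dF − S(z)⁻¹ · ∫_{(z,∞)} f dF. -/

import Mathlib

/-!
With `G(s) = ∫_{(s,∞)} f dF`, the integrand `(Af)(s) S(s)⁻¹ dF(s)` is `-d(G/S)`, so the integral
over `(a, b]` telescopes to `G(a)/S(a) - G(b)/S(b)`; at `a = 0` this is the claim. By Fubini,
`∫_{(a,b]} S⁻² G dF = ∫ f(u) (∫_{(a,b] ∩ (-∞,u)} S⁻² dF) dF(u)`, and the inner integral equals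
`S(min u b)⁻¹ - S(a)⁻¹` by the chain rule `d(1/S) = S⁻² dF` for atomless `F`. That rule is proved
by squeezing: on a short interval `I = (x, y]` both `∫_I S⁻² dF` and `S(y)⁻¹ - S(x)⁻¹` lie between
`F(I) S(x)⁻²` and `F(I) S(y)⁻²`, and continuity of `S` makes the summed errors vanish.
-/

open MeasureTheory Set Filter Topology

section SecondOrderIncrements

variable {Φ φ ψ : ℝ → ℝ} {a b : ℝ}

theorem abs_sub_le_mul_of_forall_abs_sub_le (hab : a ≤ b) (hφ : ContinuousOn φ (Icc a b))
    (hψ : MonotoneOn ψ (Icc a b))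
    (h : ∀ x ∈ Icc a b, ∀ y ∈ Icc a b, x ≤ y → |Φ y - Φ x| ≤ |φ y - φ x| * (ψ y - ψ x))
    {ε : ℝ} (hε : 0 < ε) :
    |Φ b - Φ a| ≤ ε * (ψ b - ψ a) := by
  obtain ⟨δ, hδ, hφδ⟩ := Metric.uniformContinuousOn_iff.mp
    (isCompact_Icc.uniformContinuousOn_of_continuous hφ) ε hε
  obtain ⟨n, hn⟩ := exists_nat_gt ((b - a) / δ)
  have hn0 : (0 : ℝ) < n := lt_of_le_of_lt (div_nonneg (sub_nonneg.2 hab) hδ.le) hn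
  have hmesh : 0 ≤ (b - a) / n := div_nonneg (sub_nonneg.2 hab) hn0.le
  set t : ℕ → ℝ := fun i => a + i * ((b - a) / n) with ht
  have ht0 : t 0 = a := by simp [ht]
  have htn : t n = b := by simp only [ht]; field_simp; ring
  have ht_step : ∀ i, t (i + 1) - t i = (b - a) / n := by intro i; simp only [ht]; push_cast; ring
  have ht_mem : ∀ i ≤ n, t i ∈ Icc a b := by
    intro i hi
    have hi' : (i : ℝ) * ((b - a) / n) ≤ n * ((b - a) / n) :=
      mul_le_mul_of_nonneg_right (by exact_mod_cast hi) hmesh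
    refine ⟨le_add_of_nonneg_right (mul_nonneg i.cast_nonneg hmesh), ?_⟩
    rw [← htn]
    exact add_le_add_right hi' a
  have hstep : ∀ i < n, |Φ (t (i + 1)) - Φ (t i)| ≤ ε * (ψ (t (i + 1)) - ψ (t i)) := by
    intro i hi
    have hle : t i ≤ t (i + 1) := by linarith [ht_step i]
    have hφ_small : |φ (t (i + 1)) - φ (t i)| ≤ ε := by
      refine (hφδ _ (ht_mem (i + 1) hi) _ (ht_mem i hi.le) ?_).le
      rw [Real.dist_eq, ht_step, abs_of_nonneg hmesh, div_lt_iff₀ hn0]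
      rw [div_lt_iff₀ hδ] at hn
      linarith
    calc |Φ (t (i + 1)) - Φ (t i)|
        ≤ |φ (t (i + 1)) - φ (t i)| * (ψ (t (i + 1)) - ψ (t i)) :=
          h _ (ht_mem i hi.le) _ (ht_mem (i + 1) hi) hle
      _ ≤ ε * (ψ (t (i + 1)) - ψ (t i)) := by
          gcongr
          exact sub_nonneg.2 (hψ (ht_mem i hi.le) (ht_mem (i + 1) hi) hle)
  have hΦ := Finset.sum_range_sub (fun i => Φ (t i)) n
  have hψ_sum := Finset.sum_range_sub (fun i => ψ (t i)) n
  simp only [ht0, htn] at hΦ hψ_sum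
  calc |Φ b - Φ a| = |∑ i ∈ Finset.range n, (Φ (t (i + 1)) - Φ (t i))| := by rw [hΦ]
    _ ≤ ∑ i ∈ Finset.range n, ε * (ψ (t (i + 1)) - ψ (t i)) :=
        (Finset.abs_sum_le_sum_abs _ _).trans
          (Finset.sum_le_sum fun i hi => hstep i (Finset.mem_range.mp hi))
    _ = ε * (ψ b - ψ a) := by rw [← Finset.mul_sum, hψ_sum]

theorem eq_of_forall_abs_sub_le (hab : a ≤ b) (hφ : ContinuousOn φ (Icc a b))
    (hψ : MonotoneOn ψ (Icc a b))
    (h : ∀ x ∈ Icc a b, ∀ y ∈ Icc a b, x ≤ y → |Φ y - Φ x| ≤ |φ y - φ x| * (ψ y - ψ x)) :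
    Φ b = Φ a := by
  have hlim : Tendsto (fun ε => ε * (ψ b - ψ a)) (𝓝[>] 0) (𝓝 0) := by
    simpa using (tendsto_id.mono_left (nhdsWithin_le_nhds (a := 0) (s := Ioi 0))).mul_const
      (ψ b - ψ a)
  have hle := ge_of_tendsto hlim (eventually_nhdsWithin_of_forall fun ε hε =>
    abs_sub_le_mul_of_forall_abs_sub_le hab hφ hψ h hε)
  exact sub_eq_zero.1 (abs_nonpos_iff.1 hle)

end SecondOrderIncrements

noncomputable def survival (F : Measure ℝ) (t : ℝ) : ℝ := F.real (Ioi t)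

theorem survival_nonneg {F : Measure ℝ} (t : ℝ) : 0 ≤ survival F t := measureReal_nonneg

section Survival

variable {F : Measure ℝ} [IsFiniteMeasure F] {a b : ℝ}

theorem survival_antitone : Antitone (survival F) :=
  fun _ _ h => measureReal_mono (Ioi_subset_Ioi h)

theorem survival_sub_survival (hab : a ≤ b) : survival F a - survival F b = F.real (Ioc a b) := by
  rw [survival, survival, ← measureReal_sdiff (Ioi_subset_Ioi hab) measurableSet_Ioi,
    Ioi_sdiff_Ioi]

theorem continuous_survival [NullSingletonClass F] : Continuous (survival F) := by
  refine continuous_iff_continuousAt.2 fun x => ?_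
  have h := (integrableOn_const (μ := F) (s := Ioi (x - 1)) (C := (1 : ℝ))
    |>.continuousOn_Ici_primitive_Ioi)
  simp only [setIntegral_const, smul_eq_mul, mul_one] at h
  exact h.continuousAt (Ici_mem_nhds (sub_one_lt x))

theorem inv_survival_le_inv_survival (hab : a ≤ b) (hb : 0 < survival F b) :
    (survival F a)⁻¹ ≤ (survival F b)⁻¹ :=
  inv_anti₀ hb (survival_antitone hab)

theorem ae_restrict_Ioc_norm_inv_survival_le (hb : 0 < survival F b) :
    ∀ᵐ s ∂F.restrict (Ioc a b), ‖(survival F s)⁻¹‖ ≤ (survival F b)⁻¹ := by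
  filter_upwards [ae_restrict_mem measurableSet_Ioc] with s hs
  rw [Real.norm_of_nonneg (inv_nonneg.2 (survival_nonneg s))]
  exact inv_survival_le_inv_survival hs.2 hb

theorem integrableOn_Ioc_inv_survival_pow (n : ℕ) (hb : 0 < survival F b) :
    IntegrableOn (fun s => (survival F s)⁻¹ ^ n) (Ioc a b) F := by
  refine Measure.integrableOn_of_bounded (M := (survival F b)⁻¹ ^ n) (measure_ne_top _ _)
    (survival_antitone.measurable.inv.pow_const n).aestronglyMeasurable ?_
  filter_upwards [ae_restrict_Ioc_norm_inv_survival_le hb] with s hs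
  rw [norm_pow]
  exact pow_le_pow_left₀ (norm_nonneg _) hs n

theorem abs_setIntegral_Ioc_inv_sq_survival_sub_le (hab : a ≤ b) (hb : 0 < survival F b) :
    |∫ s in Ioc a b, (survival F s)⁻¹ ^ 2 ∂F - ((survival F b)⁻¹ - (survival F a)⁻¹)|
      ≤ |survival F b - survival F a| * ((survival F b)⁻¹ ^ 2 - (survival F a)⁻¹ ^ 2) := by
  have ha : 0 < survival F a := hb.trans_le (survival_antitone hab)
  have hinv := inv_survival_le_inv_survival hab hb
  have hmass := survival_sub_survival (F := F) hab
  have hlower : (survival F a)⁻¹ ^ 2 * F.real (Ioc a b) ≤ ∫ s in Ioc a b, (survival F s)⁻¹ ^ 2 ∂F :=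
    setIntegral_ge_of_const_le_real measurableSet_Ioc (measure_ne_top _ _)
      (fun s hs => pow_le_pow_left₀ (inv_nonneg.2 ha.le)
        (inv_anti₀ (hb.trans_le (survival_antitone hs.2)) (survival_antitone hs.1.le)) 2)
      (integrableOn_Ioc_inv_survival_pow 2 hb)
  have hupper : ∫ s in Ioc a b, (survival F s)⁻¹ ^ 2 ∂F ≤ (survival F b)⁻¹ ^ 2 * F.real (Ioc a b) :=
    (setIntegral_mono_on (integrableOn_Ioc_inv_survival_pow 2 hb)
      (integrableOn_const (measure_ne_top _ _)) measurableSet_Ioc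
      fun s hs => pow_le_pow_left₀ (inv_nonneg.2 (survival_nonneg s))
        (inv_survival_le_inv_survival hs.2 hb) 2).trans_eq
      (by rw [setIntegral_const, smul_eq_mul, mul_comm])
  -- the increment of `1 / S` is `(S a - S b) / (S a S b)`, which lies in the same bracket
  have hincr : (survival F b)⁻¹ - (survival F a)⁻¹
      = (survival F a)⁻¹ * (survival F b)⁻¹ * F.real (Ioc a b) := by
    rw [← hmass]; field_simp
  rw [abs_sub_comm (survival F b), hmass, abs_of_nonneg measureReal_nonneg, hincr, abs_sub_le_iff]
  have h1 : (survival F a)⁻¹ ^ 2 ≤ (survival F a)⁻¹ * (survival F b)⁻¹ := by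
    rw [sq]; exact mul_le_mul_of_nonneg_left hinv (inv_nonneg.2 ha.le)
  have h2 : (survival F a)⁻¹ * (survival F b)⁻¹ ≤ (survival F b)⁻¹ ^ 2 := by
    rw [sq]; exact mul_le_mul_of_nonneg_right hinv (inv_nonneg.2 hb.le)
  have hm : 0 ≤ F.real (Ioc a b) := measureReal_nonneg
  constructor <;> nlinarith

theorem setIntegral_Ioc_inv_sq_survival [NullSingletonClass F] (hab : a ≤ b)
    (hb : 0 < survival F b) :
    ∫ s in Ioc a b, (survival F s)⁻¹ ^ 2 ∂F = (survival F b)⁻¹ - (survival F a)⁻¹ := by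
  have hint : ∀ x ∈ Icc a b, IntervalIntegrable (fun s => (survival F s)⁻¹ ^ 2) F a x :=
    fun x hx => (intervalIntegrable_iff_integrableOn_Ioc_of_le hx.1).2
      ((integrableOn_Ioc_inv_survival_pow 2 hb).mono_set (Ioc_subset_Ioc_right hx.2))
  have hpos : ∀ y ∈ Icc a b, 0 < survival F y := fun y hy => hb.trans_le (survival_antitone hy.2)
  have hconst := eq_of_forall_abs_sub_le
    (Φ := fun t => (∫ s in a..t, (survival F s)⁻¹ ^ 2 ∂F) - (survival F t)⁻¹)
    (ψ := fun t => (survival F t)⁻¹ ^ 2) hab continuous_survival.continuousOn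
    (fun x hx y hy hxy => pow_le_pow_left₀ (inv_nonneg.2 (survival_nonneg x))
      (inv_survival_le_inv_survival hxy (hpos y hy)) 2)
    (fun x hx y hy hxy => by
      have h := abs_setIntegral_Ioc_inv_sq_survival_sub_le hxy (hpos y hy)
      rwa [← intervalIntegral.integral_of_le hxy,
        ← intervalIntegral.integral_interval_sub_left (hint y hy) (hint x hx), sub_sub_sub_comm]
        at h)
  simp only [intervalIntegral.integral_same, zero_sub] at hconst
  rw [← intervalIntegral.integral_of_le hab]
  linarith

end Survival

section Fubini

variable {μ ν : Measure ℝ} {w f : ℝ → ℝ}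

theorem integrable_indicator_lt_mul_prod (hw : Integrable w μ) (hf : Integrable f ν) :
    Integrable (fun p : ℝ × ℝ => (Ioi p.1).indicator (fun u => w p.1 * f u) p.2) (μ.prod ν) :=
  (hw.mul_prod hf).indicator (measurableSet_lt measurable_fst measurable_snd)

theorem integrable_mul_setIntegral_Ioi [SFinite ν] (hw : Integrable w μ) (hf : Integrable f ν) :
    Integrable (fun s => w s * ∫ u in Ioi s, f u ∂ν) μ := by
  refine (integrable_indicator_lt_mul_prod hw hf).integral_prod_left.congr
    (ae_of_all _ fun s => ?_)
  simp only [integral_indicator measurableSet_Ioi, integral_const_mul]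

theorem integral_mul_setIntegral_Ioi [SFinite μ] [SFinite ν] (hw : Integrable w μ)
    (hf : Integrable f ν) :
    ∫ s, w s * (∫ u in Ioi s, f u ∂ν) ∂μ = ∫ u, (∫ s in Iio u, w s ∂μ) * f u ∂ν := by
  have hIio : ∀ s u : ℝ, (Ioi s).indicator (fun u => w s * f u) u
      = (Iio u).indicator (fun s => w s * f u) s := fun _ _ => rfl -- both test `s < u`
  calc ∫ s, w s * (∫ u in Ioi s, f u ∂ν) ∂μ
      = ∫ s, ∫ u, (Ioi s).indicator (fun u => w s * f u) u ∂ν ∂μ := by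
        simp only [integral_indicator measurableSet_Ioi, integral_const_mul]
    _ = ∫ u, ∫ s, (Iio u).indicator (fun s => w s * f u) s ∂μ ∂ν := by
        simp only [← hIio]
        exact integral_integral_swap (integrable_indicator_lt_mul_prod hw hf)
    _ = ∫ u, (∫ s in Iio u, w s ∂μ) * f u ∂ν := by
        simp only [integral_indicator measurableSet_Iio, integral_mul_const]

end Fubini

section Advanced

variable {F : Measure ℝ} [IsFiniteMeasure F] [NullSingletonClass F] {a b : ℝ}

theorem setIntegral_Iio_inter_Ioc_inv_sq_survival (hab : a ≤ b) (hb : 0 < survival F b) {u : ℝ}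
    (hu : a < u) :
    ∫ s in Iio u ∩ Ioc a b, (survival F s)⁻¹ ^ 2 ∂F
      = (survival F (min u b))⁻¹ - (survival F a)⁻¹ := by
  rcases le_or_gt u b with hub | hbu
  · have hset : Iio u ∩ Ioc a b = Ioo a u := by
      ext s; simp only [mem_inter_iff, mem_Iio, mem_Ioc, mem_Ioo]
      constructor
      · rintro ⟨hsu, has, -⟩; exact ⟨has, hsu⟩
      · rintro ⟨has, hsu⟩; exact ⟨hsu, has, hsu.le.trans hub⟩
    rw [hset, min_eq_left hub, ← integral_Ioc_eq_integral_Ioo,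
      setIntegral_Ioc_inv_sq_survival hu.le (hb.trans_le (survival_antitone hub))]
  · rw [inter_eq_right.2 fun s hs => hs.2.trans_lt hbu, min_eq_right hbu.le,
      setIntegral_Ioc_inv_sq_survival hab hb]

theorem setIntegral_Ioc_advanced_mul_inv_survival {f : ℝ → ℝ} (hf : Integrable f F) (hab : a ≤ b)
    (hb : 0 < survival F b) :
    ∫ s in Ioc a b, (f s - (survival F s)⁻¹ * ∫ u in Ioi s, f u ∂F) * (survival F s)⁻¹ ∂F
      = (survival F a)⁻¹ * (∫ u in Ioi a, f u ∂F) - (survival F b)⁻¹ * ∫ u in Ioi b, f u ∂F := by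
  have hw2 := integrableOn_Ioc_inv_survival_pow (F := F) (a := a) 2 hb
  have hwf : IntegrableOn (fun s => (survival F s)⁻¹ * f s) (Ioc a b) F :=
    hf.integrableOn.bdd_mul survival_antitone.measurable.inv.aestronglyMeasurable
      (ae_restrict_Ioc_norm_inv_survival_le hb)
  have hweight : ∀ u, (∫ s in Iio u, (survival F s)⁻¹ ^ 2 ∂F.restrict (Ioc a b)) * f u
      = (Ioc a b).indicator (fun u => (survival F u)⁻¹ * f u) u
        - (survival F a)⁻¹ * (Ioi a).indicator f u + (survival F b)⁻¹ * (Ioi b).indicator f u := by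
    intro u
    rw [Measure.restrict_restrict measurableSet_Iio]
    simp only [indicator_apply, mem_Ioc, mem_Ioi]
    rcases le_or_gt u a with hua | hau
    · have hempty : Iio u ∩ Ioc a b = ∅ :=
        eq_empty_iff_forall_notMem.2 fun s hs => not_lt.2 hua (hs.2.1.trans hs.1)
      rw [hempty, Measure.restrict_empty, integral_zero_measure]
      simp [not_lt.2 hua, not_lt.2 (hua.trans hab)]
    rw [setIntegral_Iio_inter_Ioc_inv_sq_survival hab hb hau]
    rcases le_or_gt u b with hub | hbu
    · simp [hau, hub, not_lt.2 hub]
      ring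
    · simp [hau, hbu, not_le.2 hbu, min_eq_right hbu.le]
      ring
  calc ∫ s in Ioc a b, (f s - (survival F s)⁻¹ * ∫ u in Ioi s, f u ∂F) * (survival F s)⁻¹ ∂F
      = (∫ s in Ioc a b, (survival F s)⁻¹ * f s ∂F)
          - ∫ s in Ioc a b, (survival F s)⁻¹ ^ 2 * ∫ u in Ioi s, f u ∂F ∂F := by
        rw [← integral_sub hwf (integrable_mul_setIntegral_Ioi hw2 hf)]
        congr 1; ext s; ring
    _ = (∫ s in Ioc a b, (survival F s)⁻¹ * f s ∂F)
          - ∫ u, (∫ s in Iio u, (survival F s)⁻¹ ^ 2 ∂F.restrict (Ioc a b)) * f u ∂F := by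
        rw [integral_mul_setIntegral_Ioi hw2 hf]
    _ = _ := by
        have hIoc := hwf.integrable_indicator measurableSet_Ioc
        have hIoi : ∀ c, Integrable (fun u => (survival F c)⁻¹ * (Ioi c).indicator f u) F :=
          fun c => (hf.indicator measurableSet_Ioi).const_mul _
        simp only [hweight]
        rw [integral_add ?_ (hIoi b), integral_sub hIoc (hIoi a),
          integral_indicator measurableSet_Ioc, integral_const_mul, integral_const_mul,
          integral_indicator measurableSet_Ioi, integral_indicator measurableSet_Ioi]
        · ring
        · exact hIoc.sub (hIoi a)

end Advanced

/-- Weighted integral of the advanced operator: for `f ∈ L²(F)` and any `z` with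
`S(z) > 0`, `∫_{(0,z]} (Af)(s) S(s)⁻¹ dF(s) = ∫ f dF - S(z)⁻¹ ∫_{(z,∞)} f dF`,
where `(Af)(s) = f(s) - S(s)⁻¹ ∫_{(s,∞)} f dF` and `S(t) = F((t,∞))`. -/
theorem integral_advanced_weighted (F : Measure ℝ) [IsProbabilityMeasure F]
    [NullSingletonClass F] (hF : F (Set.Ioi (0 : ℝ)) = 1)
    (f : ℝ → ℝ) (hf : MemLp f 2 F)
    (z : ℝ) (hz : 0 < (F (Set.Ioi z)).toReal) :
    ∫ s in Set.Ioc 0 z,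
        (f s - ((F (Set.Ioi s)).toReal)⁻¹ * ∫ u in Set.Ioi s, f u ∂F)
          * ((F (Set.Ioi s)).toReal)⁻¹ ∂F
      = (∫ w, f w ∂F) - ((F (Set.Ioi z)).toReal)⁻¹ * ∫ s in Set.Ioi z, f s ∂F := by
  have hmass : ∀ t ≤ 0, F (Ioi t) = 1 := fun t ht =>
    le_antisymm prob_le_one (hF ▸ measure_mono (Ioi_subset_Ioi ht))
  have hrestrict : ∀ t ≤ 0, F.restrict (Ioi t) = F := fun t ht =>
    Measure.restrict_eq_self_of_ae_mem ((mem_ae_iff_prob_eq_one measurableSet_Ioi).2 (hmass t ht))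
  rcases le_or_gt z 0 with hz0 | hz0
  · rw [Ioc_eq_empty (not_lt.2 hz0), Measure.restrict_empty, integral_zero_measure, hmass z hz0,
      hrestrict z hz0, ENNReal.toReal_one, inv_one, one_mul, sub_self]
  calc _ = (survival F 0)⁻¹ * (∫ u in Ioi 0, f u ∂F) - (survival F z)⁻¹ * ∫ u in Ioi z, f u ∂F :=
        setIntegral_Ioc_advanced_mul_inv_survival (hf.integrable one_le_two) hz0.le hz
    _ = _ := by
        rw [survival, measureReal_def, hmass 0 le_rfl, hrestrict 0 le_rfl, ENNReal.toReal_one,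
          inv_one, one_mul]
        rfl
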